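/- Along any diagonal i, the prefix edit distance is non-decreasing and 1-Lipschitz: for every integer x with max(0,i) ≤ x < min(n, m+i), d_i(x) ≤ d_i(x+1) ≤ d_i(x) + 1. Consequently, for each t the set S_t(i) is a downward-closed subset (an initial segment) of the diagonal domain, so it suffices to record only its maximum element f(t,i). -/

import Mathlib

namespace Levenshtein

structure Cost (α β δ : Type*) where
  delete : α → δ
  insert : β → δ
  substitute : α → β → δ

def defaultCost {α : Type*} [DecidableEq α] : Cost α α ℕ where
  delete _ := 1
  insert _ := 1
  substitute a b := if a = b then 0 else 1

end Levenshtein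

def levenshtein {α β δ : Type*} [AddZeroClass δ] [Min δ] (C : Levenshtein.Cost α β δ) :
    List α → List β → δ
  | [], [] => 0
  | x :: xs, [] => C.delete x + levenshtein C xs []
  | [], y :: ys => C.insert y + levenshtein C [] ys
  | x :: xs, y :: ys =>
      min (C.delete x + levenshtein C xs (y :: ys))
        (min (C.insert y + levenshtein C (x :: xs) ys) (C.substitute x y + levenshtein C xs ys))

/-- The unit-cost Levenshtein edit distance. -/
def editDist {α : Type*} [DecidableEq α] (A B : List α) : ℕ :=
  levenshtein Levenshtein.defaultCost A B

/-- The prefix edit distance along diagonal `i`: `d_i(x) = d(A.take x, B.take (x - i))`. -/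
def diagDist {α : Type*} [DecidableEq α] (A B : List α) (i x : ℤ) : ℕ :=
  editDist (A.take x.toNat) (B.take (x - i).toNat)

/-!
Appending one character to each of two words raises their edit distance by at most one
(substitute the new last characters), and never lowers it. Since `levenshtein` recurses on the
heads of the words, both facts are proved by induction from the front; the base cases, where one
word is empty, need the lower bound `|len A - len B| ≤ d(A, B)`. Monotonicity along a diagonal
then makes each `S_t(i)` downward closed.
-/

section EditDist

variable {α : Type*} [DecidableEq α]

@[simp]
lemma editDist_nil_left (B : List α) : editDist [] B = B.length := by
  induction B with
  | nil => rw [editDist, levenshtein]; rfl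
  | cons b B ih =>
    rw [editDist, levenshtein, ← editDist, ih, List.length_cons, Nat.add_comm]
    rfl

@[simp]
lemma editDist_nil_right (A : List α) : editDist A [] = A.length := by
  induction A with
  | nil => rw [editDist, levenshtein]; rfl
  | cons a A ih =>
    rw [editDist, levenshtein, ← editDist, ih, List.length_cons, Nat.add_comm]
    rfl

lemma editDist_cons_cons (a b : α) (A B : List α) :
    editDist (a :: A) (b :: B) =
      min (1 + editDist A (b :: B))
        (min (1 + editDist (a :: A) B) ((if a = b then 0 else 1) + editDist A B)) := by
  rw [editDist, levenshtein]
  rfl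

lemma length_le_editDist_add_length : ∀ A B : List α, A.length ≤ editDist A B + B.length
  | [], _ => Nat.zero_le _
  | _ :: _, [] => by simp
  | a :: A, b :: B => by
    have := length_le_editDist_add_length A (b :: B)
    have := length_le_editDist_add_length (a :: A) B
    have := length_le_editDist_add_length A B
    rw [editDist_cons_cons]
    split_ifs <;> simp only [List.length_cons] at * <;> omega

lemma length_le_length_add_editDist : ∀ A B : List α, B.length ≤ A.length + editDist A B
  | _, [] => Nat.zero_le _
  | [], _ :: _ => by simp
  | a :: A, b :: B => by
    have := length_le_length_add_editDist A (b :: B)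
    have := length_le_length_add_editDist (a :: A) B
    have := length_le_length_add_editDist A B
    rw [editDist_cons_cons]
    split_ifs <;> simp only [List.length_cons] at * <;> omega

lemma editDist_le_editDist_append_singleton (a b : α) :
    ∀ A B : List α, editDist A B ≤ editDist (A ++ [a]) (B ++ [b])
  | [], B => by
    have := length_le_length_add_editDist [a] (B ++ [b])
    simp only [List.nil_append, List.length_append, List.length_singleton, editDist_nil_left] at *
    omega
  | A, [] => by
    have := length_le_editDist_add_length (A ++ [a]) [b]
    simp only [List.nil_append, List.length_append, List.length_singleton, editDist_nil_right] at *
    omega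
  | x :: A, y :: B => by
    have := editDist_le_editDist_append_singleton a b A (y :: B)
    have := editDist_le_editDist_append_singleton a b (x :: A) B
    have := editDist_le_editDist_append_singleton a b A B
    simp only [List.cons_append, editDist_cons_cons] at *
    split_ifs <;> omega

lemma editDist_append_singleton_le (a b : α) :
    ∀ A B : List α, editDist (A ++ [a]) (B ++ [b]) ≤ editDist A B + 1
  | [], [] => by
    simp only [List.nil_append, editDist_cons_cons, editDist_nil_left, editDist_nil_right]
    split_ifs <;> simp
  | [], y :: B => by
    have := editDist_append_singleton_le a b [] B
    simp only [List.nil_append, List.cons_append, editDist_cons_cons, editDist_nil_left,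
      List.length_cons] at *
    omega
  | x :: A, [] => by
    have := editDist_append_singleton_le a b A []
    simp only [List.nil_append, List.cons_append, editDist_cons_cons, editDist_nil_right,
      List.length_cons] at *
    omega
  | x :: A, y :: B => by
    have := editDist_append_singleton_le a b A (y :: B)
    have := editDist_append_singleton_le a b (x :: A) B
    have := editDist_append_singleton_le a b A B
    simp only [List.cons_append, editDist_cons_cons] at *
    split_ifs <;> omega

end EditDist

section Diagonal

variable {α : Type*} [DecidableEq α] (A B : List α) (i : ℤ)

lemma diagDist_add_one_mem_Icc {x : ℤ} (hx₁ : max 0 i ≤ x)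
    (hx₂ : x < min (A.length : ℤ) ((B.length : ℤ) + i)) :
    diagDist A B i (x + 1) ∈ Set.Icc (diagDist A B i x) (diagDist A B i x + 1) := by
  have hA : x.toNat < A.length := by omega
  have hB : (x - i).toNat < B.length := by omega
  have hA' : (x + 1).toNat = x.toNat + 1 := by omega
  have hB' : (x + 1 - i).toNat = (x - i).toNat + 1 := by omega
  simp only [diagDist, hA', hB', ← List.take_concat_get' _ _ hA, ← List.take_concat_get' _ _ hB]
  exact ⟨editDist_le_editDist_append_singleton .., editDist_append_singleton_le ..⟩

lemma diagDist_monotoneOn :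
    MonotoneOn (diagDist A B i) (Set.Icc (max 0 i) (min (A.length : ℤ) ((B.length : ℤ) + i))) :=
  monotoneOn_of_le_succ Set.ordConnected_Icc fun x _ hx hx_succ => by
    rw [Order.succ_eq_add_one] at hx_succ ⊢
    exact (diagDist_add_one_mem_Icc A B i hx.1 (Int.lt_of_add_one_le hx_succ.2)).1

end Diagonal

theorem diagDist_mono_lipschitz_general {α : Type*} [DecidableEq α] (A B : List α) (i : ℤ) :
    (∀ x : ℤ, max 0 i ≤ x → x < min (A.length : ℤ) ((B.length : ℤ) + i) →
      diagDist A B i x ≤ diagDist A B i (x + 1) ∧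
      diagDist A B i (x + 1) ≤ diagDist A B i x + 1) ∧
    (∀ (t : ℕ) (x y : ℤ), max 0 i ≤ x → x ≤ y →
      y ≤ min (A.length : ℤ) ((B.length : ℤ) + i) →
      diagDist A B i y ≤ t → diagDist A B i x ≤ t) :=
  ⟨fun _ ↦ diagDist_add_one_mem_Icc A B i, fun _ _ _ hx hxy hy hyt ↦
    (diagDist_monotoneOn A B i ⟨hx, hxy.trans hy⟩ ⟨hx.trans hxy, hy⟩ hxy).trans hyt⟩

/-- Along any diagonal `i`, the prefix edit distance is non-decreasing and 1-Lipschitz;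
consequently, for each `t` the set `S_t(i)` is downward closed in the diagonal domain. -/
theorem diagDist_mono_lipschitz {α : Type*} [DecidableEq α] (A B : List α) (i : ℤ)
    (hi₁ : -(B.length : ℤ) ≤ i) (hi₂ : i ≤ (A.length : ℤ)) :
    (∀ x : ℤ, max 0 i ≤ x → x < min (A.length : ℤ) ((B.length : ℤ) + i) →
      diagDist A B i x ≤ diagDist A B i (x + 1) ∧
      diagDist A B i (x + 1) ≤ diagDist A B i x + 1) ∧
    (∀ (t : ℕ) (x y : ℤ), max 0 i ≤ x → x ≤ y →
      y ≤ min (A.length : ℤ) ((B.length : ℤ) + i) →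
      diagDist A B i y ≤ t → diagDist A B i x ≤ t) :=
  diagDist_mono_lipschitz_general A B i
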